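/- arXiv:2602.05725 — 2 statements merged into one kernel-verified Lean document; each statement's English description precedes it below -/
import Mathlib

section
/- Let K ≥ 2 be a natural number, p ∈ (0,1], and η > 0. Define Δ : ℕ → ℝ by Δ_0 = 0 and Δ_{t+1} = Δ_t + η·p·K / (exp(Δ_t) + K − 1). Then t · log(1 + (K−1)·exp(−Δ_t)) → (K−1)/(η·p·K) as t → ∞; that is, the noiseless sub-task cross-entropy loss log(1 + (K−1)e^{−Δ_t}) decays like (K−1)/(η p K t). -/
/-!
Put `u_t = exp Δ_t`, `a = K - 1` and `c = η p K`. The recursion becomes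
`u_{t+1} = u_t exp (c / (u_t + a))`, so `u` grows at least linearly and its increments
`u_t (exp (c / (u_t + a)) - 1)` tend to `c`; by Cesàro, `u_t / t → c`. Since
`u log (1 + a / u) → a` as `u → ∞`, the loss `log (1 + a / u_t)` is asymptotic to `a / (c t)`.
-/

open Real Filter Topology

lemma Real.tendsto_mul_exp_sub_one_of_tendsto {g : ℝ → ℝ} {t : ℝ}
    (hg : Tendsto (fun x ↦ x * g x) atTop (𝓝 t)) :
    Tendsto (fun x ↦ x * (exp (g x) - 1)) atTop (𝓝 t) := by
  have hg0 : Tendsto g atTop (𝓝 0) := tendsto_zero_of_isBoundedUnder_smul_of_tendsto_cobounded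
    hg.norm.isBoundedUnder_le (tendsto_id'.mpr (by simp))
  have herr : Tendsto (fun x ↦ x * (exp (g x) - 1 - g x)) atTop (𝓝 0) := by
    refine squeeze_zero_norm' ?_ (by simpa using hg.norm.mul hg0.norm)
    filter_upwards [hg0.norm.eventually (eventually_le_nhds (by simp : ‖(0 : ℝ)‖ < 1))] with x hx
    rw [Real.norm_eq_abs, abs_mul, mul_assoc, ← sq, sq_abs]
    gcongr
    exact abs_exp_sub_one_sub_id_le hx
  simpa [mul_sub, sub_add_cancel] using hg.add herr

lemma tendsto_mul_exp_div_add_sub_one (a c : ℝ) :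
    Tendsto (fun x ↦ x * (exp (c / (x + a)) - 1)) atTop (𝓝 c) := by
  refine Real.tendsto_mul_exp_sub_one_of_tendsto ?_
  have hxa : Tendsto (fun x : ℝ ↦ x + a) atTop atTop := tendsto_atTop_add_const_right _ a tendsto_id
  have := (tendsto_const_nhds (x := c)).sub ((tendsto_const_nhds (x := a * c)).div_atTop hxa)
  rw [sub_zero] at this
  refine this.congr' ?_
  filter_upwards [hxa.eventually_ne_atTop 0] with x hx
  field_simp
  ring

lemma tendsto_div_natCast_of_tendsto_sub {u : ℕ → ℝ} {c : ℝ}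
    (h : Tendsto (fun n ↦ u (n + 1) - u n) atTop (𝓝 c)) :
    Tendsto (fun n : ℕ ↦ u n / n) atTop (𝓝 c) := by
  have hmean := h.cesaro.add (tendsto_inv_atTop_nhds_zero_nat.const_mul (u 0))
  rw [mul_zero, add_zero] at hmean
  refine hmean.congr fun n ↦ ?_
  rw [Finset.sum_range_sub u n]
  ring

noncomputable def expMargin (a c u₀ : ℝ) : ℕ → ℝ
  | 0 => u₀
  | t + 1 => expMargin a c u₀ t * exp (c / (expMargin a c u₀ t + a))

section expMargin

variable {a c u₀ : ℝ}

lemma expMargin_pos (hu₀ : 0 < u₀) (t : ℕ) : 0 < expMargin a c u₀ t := by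
  induction t with
  | zero => exact hu₀
  | succ t ih => rw [expMargin]; positivity

lemma mul_div_le_expMargin_succ_sub (hu₀ : 0 < u₀) (t : ℕ) :
    expMargin a c u₀ t * (c / (expMargin a c u₀ t + a)) ≤
      expMargin a c u₀ (t + 1) - expMargin a c u₀ t := by
  have := add_one_le_exp (c / (expMargin a c u₀ t + a))
  rw [expMargin]
  nlinarith [expMargin_pos (a := a) (c := c) hu₀ t]

lemma monotone_expMargin (hu₀ : 0 < u₀) (ha : 0 ≤ a) (hc : 0 ≤ c) :
    Monotone (expMargin a c u₀) := by
  refine monotone_nat_of_le_succ fun t ↦ ?_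
  have hpos := expMargin_pos (a := a) (c := c) hu₀ t
  have hstep := mul_div_le_expMargin_succ_sub (a := a) (c := c) hu₀ t
  have : 0 ≤ expMargin a c u₀ t * (c / (expMargin a c u₀ t + a)) := by positivity
  linarith

lemma tendsto_expMargin_atTop (hu₀ : 0 < u₀) (ha : 0 ≤ a) (hc : 0 < c) :
    Tendsto (expMargin a c u₀) atTop atTop := by
  set u := expMargin a c u₀
  have hstep (t : ℕ) : u₀ * (c / (u₀ + a)) ≤ u (t + 1) - u t := by
    have h0t : u₀ ≤ u t := monotone_expMargin hu₀ ha hc.le (Nat.zero_le t)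
    have hfrac : u₀ / (u₀ + a) ≤ u t / (u t + a) := by
      rw [div_le_div_iff₀ (by positivity) (by linarith)]
      nlinarith
    calc u₀ * (c / (u₀ + a)) = c * (u₀ / (u₀ + a)) := by ring
      _ ≤ c * (u t / (u t + a)) := by gcongr
      _ = u t * (c / (u t + a)) := by ring
      _ ≤ u (t + 1) - u t := mul_div_le_expMargin_succ_sub hu₀ t
  have hlin (t : ℕ) : u₀ + t * (u₀ * (c / (u₀ + a))) ≤ u t := by
    induction t with
    | zero => simp [u, expMargin]
    | succ t ih => push_cast; linarith [hstep t]
  refine tendsto_atTop_mono hlin (tendsto_atTop_add_const_left _ _ ?_)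
  exact tendsto_natCast_atTop_atTop.atTop_mul_const (by positivity)

lemma tendsto_expMargin_succ_sub (hu₀ : 0 < u₀) (ha : 0 ≤ a) (hc : 0 < c) :
    Tendsto (fun t ↦ expMargin a c u₀ (t + 1) - expMargin a c u₀ t) atTop (𝓝 c) := by
  refine ((tendsto_mul_exp_div_add_sub_one a c).comp
    (tendsto_expMargin_atTop hu₀ ha hc)).congr fun t ↦ ?_
  simp only [Function.comp, expMargin]
  ring

end expMargin

theorem stmt5_general (K : ℕ) (hK : 2 ≤ K) (p η : ℝ) (hp0 : 0 < p) (hη : 0 < η)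
    (Δ : ℕ → ℝ) (h0 : Δ 0 = 0)
    (hrec : ∀ t, Δ (t + 1) = Δ t + η * p * K / (Real.exp (Δ t) + K - 1)) :
    Tendsto (fun t : ℕ => (t : ℝ) * Real.log (1 + (K - 1) * Real.exp (-Δ t))) atTop
      (nhds ((K - 1) / (η * p * K))) := by
  have hexp (t : ℕ) : exp (Δ t) = expMargin (K - 1) (η * p * K) 1 t := by
    induction t with
    | zero => simp [h0, expMargin]
    | succ t ih => rw [hrec, exp_add, expMargin, ← ih, add_sub_assoc]
  have ha : (0 : ℝ) ≤ K - 1 := by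
    have : (2 : ℝ) ≤ K := by exact_mod_cast hK
    linarith
  have hc : 0 < η * p * K := by positivity
  have hgrowth := tendsto_div_natCast_of_tendsto_sub (tendsto_expMargin_succ_sub one_pos ha hc)
  have hlog := (tendsto_mul_log_one_add_div_atTop ((K : ℝ) - 1)).comp
    (tendsto_expMargin_atTop one_pos ha hc)
  rw [div_eq_inv_mul]
  refine ((hgrowth.inv₀ hc.ne').mul hlog).congr fun t ↦ ?_
  have hu := (expMargin_pos (a := K - 1) (c := η * p * K) one_pos t).ne'
  rw [Function.comp_apply, exp_neg, hexp]
  generalize expMargin _ _ 1 t = x at hu ⊢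
  field_simp

theorem stmt5 (K : ℕ) (hK : 2 ≤ K) (p η : ℝ) (hp0 : 0 < p) (hp1 : p ≤ 1) (hη : 0 < η)
    (Δ : ℕ → ℝ) (h0 : Δ 0 = 0)
    (hrec : ∀ t, Δ (t + 1) = Δ t + η * p * K / (Real.exp (Δ t) + K - 1)) :
    Tendsto (fun t : ℕ => (t : ℝ) * Real.log (1 + (K - 1) * Real.exp (-Δ t))) atTop
      (nhds ((K - 1) / (η * p * K))) :=
  stmt5_general K hK p η hp0 hη Δ h0 hrec
end

section
/- Let A, B, D be positive reals with A − B·D > D and A < 4·B, and let x* = log((A − B·D)/D). Define x : ℕ → ℝ by x_0 = 0 and x_{t+1} = x_t + A/(exp(x_t) + B) − D. If x_t ≤ x* for all t, then for all t, x* − x_t ≥ x* · (1 − A/(4·B))^t. -/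
/-!
The map `g u = A / (exp u + B)` has `|g'| = A eᵘ / (eᵘ + B)² ≤ A / (4B)` by AM-GM, so it is
`A / (4B)`-Lipschitz, and `g x* = D`. Hence `x* - x_{t+1} = (x* - x_t) - (g x_t - g x*)`
is at least `(1 - A / (4B)) (x* - x_t)` while `x_t ≤ x*`, and the bound follows by iteration.
-/

open Real

lemma hasDerivAt_div_exp_add (A : ℝ) {B : ℝ} (hB : 0 ≤ B) (u : ℝ) :
    HasDerivAt (fun u => A / (exp u + B)) (-(A * exp u) / (exp u + B) ^ 2) u := by
  have h : HasDerivAt (fun u => A / (exp u + B))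
      ((0 * (exp u + B) - A * exp u) / (exp u + B) ^ 2) u :=
    (hasDerivAt_const u A).div ((hasDerivAt_exp u).add_const B) (by positivity)
  convert h using 1
  ring

lemma mul_exp_div_exp_add_sq_le {A B : ℝ} (hA : 0 ≤ A) (hB : 0 < B) (u : ℝ) :
    A * exp u / (exp u + B) ^ 2 ≤ A / (4 * B) := by
  rw [div_le_div_iff₀ (by positivity) (by positivity), mul_assoc]
  gcongr
  linarith [four_mul_le_sq_add (exp u) B]

lemma abs_div_exp_add_sub_le {A B : ℝ} (hA : 0 ≤ A) (hB : 0 < B) (u v : ℝ) :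
    |A / (exp u + B) - A / (exp v + B)| ≤ A / (4 * B) * |u - v| := by
  refine convex_univ.norm_image_sub_le_of_norm_hasDerivWithin_le
    (fun w _ => (hasDerivAt_div_exp_add A hB.le w).hasDerivWithinAt) (fun w _ => ?_)
    (Set.mem_univ v) (Set.mem_univ u)
  rw [norm_div, norm_neg, norm_of_nonneg (by positivity), norm_of_nonneg (by positivity)]
  exact mul_exp_div_exp_add_sq_le hA hB w

lemma div_exp_log_add_eq {A B D : ℝ} (hB : 0 ≤ B) (hD : 0 < D) (hBD : B * D < A) :
    A / (exp (log ((A - B * D) / D)) + B) = D := by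
  have hA : 0 < A := by nlinarith
  have hsum : (A - B * D) / D + B = A / D := by field_simp; ring
  rw [exp_log (div_pos (by linarith) hD), hsum, div_div_cancel₀ hA.ne']

theorem stmt7_general (A B D : ℝ) (hB : 0 < B) (hD : 0 < D)
    (h1 : D < A - B * D) (h2 : A < 4 * B)
    (xstar : ℝ) (hxstar : xstar = Real.log ((A - B * D) / D))
    (x : ℕ → ℝ) (h0 : x 0 = 0)
    (hrec : ∀ t, x (t + 1) = x t + A / (Real.exp (x t) + B) - D)
    (hle : ∀ t, x t ≤ xstar) :
    ∀ t, xstar * (1 - A / (4 * B)) ^ t ≤ xstar - x t := by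
  have hA : 0 < A := by nlinarith
  have hfix : A / (exp xstar + B) = D := hxstar ▸ div_exp_log_add_eq hB.le hD (by linarith)
  have hq : 0 ≤ 1 - A / (4 * B) := by
    rw [sub_nonneg, div_le_one (by positivity)]
    exact h2.le
  have hstep : ∀ t, (1 - A / (4 * B)) * (xstar - x t) ≤ xstar - x (t + 1) := by
    intro t
    have hlip := abs_div_exp_add_sub_le hA.le hB (x t) xstar
    rw [hfix, abs_sub_comm (x t), abs_of_nonneg (sub_nonneg.2 (hle t))] at hlip
    rw [hrec t]
    linarith [le_abs_self (A / (exp (x t) + B) - D)]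
  intro t
  simpa [h0, mul_comm] using geom_le hq t fun k _ => hstep k

theorem stmt7 (A B D : ℝ) (hA : 0 < A) (hB : 0 < B) (hD : 0 < D)
    (h1 : D < A - B * D) (h2 : A < 4 * B)
    (xstar : ℝ) (hxstar : xstar = Real.log ((A - B * D) / D))
    (x : ℕ → ℝ) (h0 : x 0 = 0)
    (hrec : ∀ t, x (t + 1) = x t + A / (Real.exp (x t) + B) - D)
    (hle : ∀ t, x t ≤ xstar) :
    ∀ t, xstar * (1 - A / (4 * B)) ^ t ≤ xstar - x t :=
  stmt7_general A B D hB hD h1 h2 xstar hxstar x h0 hrec hle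
end
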